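/- Let N, N1, M, K, D, Δ be parameters with Δ ≥ 4, and suppose that N^K · (eD)^(M/D) · exp(−(Δ−1)·ln((Δ−1)/3)·K·N1/D) < 1. Then there exists a table E : [N] × [N1] → [M] such that for every B ⊆ [N] with |B| = K and every A ⊆ [M] with |A| = M/D, the number of A-cells in B × [N1] is at most Δ·(|A|/M)·|B|·N1. -/

import Mathlib

open scoped Classical

/-!
Count tables instead of drawing one at random. For fixed `B` and `A`, let `c(E)` be the number of
`A`-cells of `E` in `B × [N1]`. The weight `x ^ c(E)` factorizes over the cells, so its sum over
all tables is `(|A| x + |Aᶜ|) ^ (|B| N1) · M ^ ((N - |B|) N1) ≤ M ^ (N N1) · exp (μ (x - 1))`,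
where `μ = |B| N1 |A| / M` is the mean of `c`. Markov's inequality for `x = e ^ s` bounds the
fraction of tables with `c(E) > t` by `exp (μ (e ^ s - 1) - s t)`. At `t = Δ μ` and
`s = log ((Δ - 1) / 3) + 1` this is at most `exp (-(Δ - 1) log ((Δ - 1) / 3) μ)`; there are at
most `N ^ K (e D) ^ (M / D)` pairs `(B, A)`, so the hypothesis makes the union bound less than one.
-/

open Finset Real

section
variable {ι κ α : Type*} [Fintype κ] [DecidableEq α]

def cellCount (E : ι → κ → α) (B : Finset ι) (A : Finset α) : ℕ :=
  #{p ∈ B ×ˢ univ | E p.1 p.2 ∈ A}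

theorem pow_cellCount [Fintype ι] [DecidableEq ι] {M : Type*} [CommMonoid M] (E : ι → κ → α)
    (B : Finset ι) (A : Finset α) (x : M) :
    x ^ cellCount E B A = ∏ u, ∏ v, if u ∈ B ∧ E u v ∈ A then x else 1 := by
  simp only [cellCount, ← prod_const, prod_filter, prod_product, ite_and, prod_ite_irrel,
    prod_const_one, Fintype.prod_ite_mem]

variable [Fintype ι] [Fintype α]

theorem sum_pow_cellCount [DecidableEq ι] {R : Type*} [CommSemiring R] (B : Finset ι)
    (A : Finset α) (x : R) :
    ∑ E : ι → κ → α, x ^ cellCount E B A =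
      ((#A : R) * x + #Aᶜ) ^ (#B * Fintype.card κ) *
        (Fintype.card α : R) ^ (#Bᶜ * Fintype.card κ) := by
  have hcell : ∀ u, ∑ m, (if u ∈ B ∧ m ∈ A then x else 1) =
      if u ∈ B then (#A : R) * x + #Aᶜ else Fintype.card α := by
    intro u
    split_ifs with hu <;> simp [hu, sum_ite, mul_comm, filter_not, compl_eq_univ_sdiff]
  calc ∑ E : ι → κ → α, x ^ cellCount E B A
      = ∏ u, ∏ v : κ, ∑ m, if u ∈ B ∧ m ∈ A then x else 1 := by
        simp_rw [pow_cellCount, Fintype.prod_sum]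
    _ = _ := by
        simp [hcell, prod_ite, ← pow_mul, mul_comm, filter_not, compl_eq_univ_sdiff]

theorem card_filter_lt_mul_exp_le_sum_exp {β : Type*} (S : Finset β) (g : β → ℝ) {s : ℝ}
    (hs : 0 ≤ s) (t : ℝ) : #{x ∈ S | t < g x} * exp (s * t) ≤ ∑ x ∈ S, exp (s * g x) :=
  calc #{x ∈ S | t < g x} * exp (s * t) = ∑ x ∈ S with t < g x, exp (s * t) := by
        rw [sum_const, nsmul_eq_mul]
    _ ≤ ∑ x ∈ S with t < g x, exp (s * g x) :=
        sum_le_sum fun x hx ↦ exp_le_exp.2 <| by gcongr; exact (mem_filter.1 hx).2.le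
    _ ≤ ∑ x ∈ S, exp (s * g x) :=
        sum_le_sum_of_subset_of_nonneg (filter_subset _ _) fun _ _ _ ↦ (exp_pos _).le

theorem card_add_mul_le_card_mul_exp [Nonempty α] (A : Finset α) (y : ℝ) :
    (#A : ℝ) * y + #Aᶜ ≤ Fintype.card α * exp (#A / Fintype.card α * (y - 1)) := by
  have hm : (0 : ℝ) < Fintype.card α := by exact_mod_cast Fintype.card_pos
  have hsplit : (#A : ℝ) + #Aᶜ = Fintype.card α := by exact_mod_cast card_add_card_compl A
  calc (#A : ℝ) * y + #Aᶜ = Fintype.card α * (#A / Fintype.card α * (y - 1) + 1) := by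
        field_simp; linarith
    _ ≤ _ := by gcongr; exact add_one_le_exp _

theorem card_filter_lt_cellCount_le [DecidableEq ι] [Nonempty α] (B : Finset ι) (A : Finset α)
    {s : ℝ} (hs : 0 ≤ s) (t : ℝ) :
    (#{E : ι → κ → α | t < cellCount E B A} : ℝ) ≤ Fintype.card (ι → κ → α) *
      exp (#B * Fintype.card κ * #A / Fintype.card α * (exp s - 1) - s * t) := by
  set m : ℝ := (Fintype.card α : ℝ)
  have hmgf : ∑ E : ι → κ → α, exp (s * cellCount E B A) ≤
      (m * exp (#A / m * (exp s - 1))) ^ (#B * Fintype.card κ) * m ^ (#Bᶜ * Fintype.card κ) := by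
    simp_rw [mul_comm s, exp_nat_mul, sum_pow_cellCount]
    gcongr
    exact card_add_mul_le_card_mul_exp A _
  have hcard : (Fintype.card (ι → κ → α) : ℝ) =
      m ^ (#B * Fintype.card κ) * m ^ (#Bᶜ * Fintype.card κ) := by
    rw [← pow_add, ← add_mul, card_add_card_compl, Fintype.card_fun, Fintype.card_fun, pow_mul']
    push_cast; rfl
  rw [exp_sub, mul_div_assoc', le_div_iff₀ (exp_pos _)]
  refine (card_filter_lt_mul_exp_le_sum_exp univ (fun E ↦ (cellCount E B A : ℝ)) hs t).trans
    (hmgf.trans_eq ?_)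
  rw [hcard, mul_pow, ← exp_nat_mul]
  push_cast
  rw [mul_right_comm]
  congr 2
  ring

theorem exists_forall_cellCount_le [DecidableEq ι] [Nonempty α] (K a : ℕ) {s : ℝ}
    (hs : 0 ≤ s) (t : ℝ) (h : ((Fintype.card ι).choose K * (Fintype.card α).choose a : ℝ) *
      exp (K * Fintype.card κ * a / Fintype.card α * (exp s - 1) - s * t) < 1) :
    ∃ E : ι → κ → α, ∀ B A, #B = K → #A = a → (cellCount E B A : ℝ) ≤ t := by
  set pairs := powersetCard K (univ : Finset ι) ×ˢ powersetCard a (univ : Finset α)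
  set bad : Finset ι × Finset α → Finset (ι → κ → α) :=
    fun BA ↦ {E | t < cellCount E BA.1 BA.2}
  have hbad : #(pairs.biUnion bad) < #(univ : Finset (ι → κ → α)) := by
    have hpair : ∀ BA ∈ pairs, (#(bad BA) : ℝ) ≤ Fintype.card (ι → κ → α) *
        exp (K * Fintype.card κ * a / Fintype.card α * (exp s - 1) - s * t) := by
      rintro ⟨B, A⟩ hBA
      obtain ⟨hB, hA⟩ : #B = K ∧ #A = a := by simpa [pairs] using hBA
      simpa [bad, hB, hA] using card_filter_lt_cellCount_le (κ := κ) B A hs t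
    have hpos : (0 : ℝ) < Fintype.card (ι → κ → α) := by exact_mod_cast Fintype.card_pos
    rw [← Nat.cast_lt (α := ℝ), card_univ]
    calc (#(pairs.biUnion bad) : ℝ) ≤ ∑ BA ∈ pairs, (#(bad BA) : ℝ) := by
          exact_mod_cast card_biUnion_le
      _ ≤ #pairs * (Fintype.card (ι → κ → α) *
          exp (K * Fintype.card κ * a / Fintype.card α * (exp s - 1) - s * t)) := by
        simpa using sum_le_sum hpair
      _ < Fintype.card (ι → κ → α) := by
        simp only [pairs, card_product, card_powersetCard, card_univ]
        push_cast
        nlinarith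
  obtain ⟨E, -, hE⟩ := exists_mem_notMem_of_card_lt_card hbad
  refine ⟨E, fun B A hB hA ↦ not_lt.1 fun hlt ↦ hE (mem_biUnion.2 ⟨(B, A), ?_, ?_⟩)⟩
  · simp [pairs, hB, hA]
  · simpa [bad] using hlt
end

theorem Nat.choose_le_exp_one_mul_div_pow (n k : ℕ) :
    (n.choose k : ℝ) ≤ (exp 1 * n / k) ^ k := by
  rcases k.eq_zero_or_pos with rfl | hk
  · simp
  have hk' : (k : ℝ) ≠ 0 := by positivity
  calc (n.choose k : ℝ) ≤ n ^ k / k.factorial := Nat.choose_le_pow_div k n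
    _ = (n / k) ^ k * (k ^ k / k.factorial) := by
        rw [← mul_div_assoc, ← mul_pow, div_mul_cancel₀ _ hk']
    _ ≤ (n / k) ^ k * exp k := by gcongr; exact pow_div_factorial_le_exp _ (by positivity) k
    _ = (exp 1 * n / k) ^ k := by rw [← exp_one_pow]; ring

theorem Nat.choose_div_le_exp_one_mul_pow {n d : ℕ} (h : d ∣ n) :
    (n.choose (n / d) : ℝ) ≤ (exp 1 * d) ^ (n / d) := by
  rcases eq_or_ne n 0 with rfl | hn
  · simp
  have hd : (d : ℝ) ≠ 0 := by exact_mod_cast ne_zero_of_dvd_ne_zero hn h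
  have hn' : (n : ℝ) ≠ 0 := by exact_mod_cast hn
  simpa [Nat.cast_div h hd, mul_div_assoc, div_div_cancel₀ hn'] using
    Nat.choose_le_exp_one_mul_div_pow n (n / d)

theorem chernoff_exponent_le {Δ μ : ℝ} (hΔ : 4 ≤ Δ) (hμ : 0 ≤ μ) :
    μ * (exp (log ((Δ - 1) / 3) + 1) - 1) - (log ((Δ - 1) / 3) + 1) * (Δ * μ) ≤
      -((Δ - 1) * log ((Δ - 1) / 3) * μ) := by
  have hL : 0 ≤ log ((Δ - 1) / 3) := log_nonneg (by linarith)
  rw [exp_add, exp_log (by linarith)]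
  have key : (Δ - 1) / 3 * exp 1 - 1 - (log ((Δ - 1) / 3) + 1) * Δ ≤
      -((Δ - 1) * log ((Δ - 1) / 3)) := by
    nlinarith [exp_one_lt_three]
  nlinarith [mul_le_mul_of_nonneg_left key hμ]

theorem stmt_8_general (N N1 M K D : ℕ) (hM : 0 < M) (hdvd : D ∣ M)
    (Δ : ℝ) (hΔ : 4 ≤ Δ)
    (hsmall : (N : ℝ) ^ K * (Real.exp 1 * D) ^ (M / D) *
        Real.exp (-((Δ - 1) * Real.log ((Δ - 1) / 3) * ((K : ℝ) * N1 / D))) < 1) :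
    ∃ E : Fin N → Fin N1 → Fin M, ∀ B : Finset (Fin N), ∀ A : Finset (Fin M),
      B.card = K → A.card = M / D →
      (((B ×ˢ (Finset.univ : Finset (Fin N1))).filter fun p => E p.1 p.2 ∈ A).card : ℝ) ≤
        Δ * ((A.card : ℝ) / M) * B.card * N1 := by
  have : Nonempty (Fin M) := ⟨⟨0, hM⟩⟩
  set L := log ((Δ - 1) / 3)
  set μ : ℝ := K * N1 / D
  have hmean : (K : ℝ) * N1 * (M / D : ℕ) / M = μ := by
    have hD : (D : ℝ) ≠ 0 := by exact_mod_cast (Nat.pos_of_dvd_of_pos hdvd hM).ne'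
    rw [Nat.cast_div hdvd hD, mul_div_assoc, div_div_cancel_left' (by positivity)]
    exact (div_eq_mul_inv _ _).symm
  have hunion : ((Fintype.card (Fin N)).choose K * (Fintype.card (Fin M)).choose (M / D) : ℝ) *
      exp (K * Fintype.card (Fin N1) * (M / D : ℕ) / Fintype.card (Fin M) *
        (exp (L + 1) - 1) - (L + 1) * (Δ * μ)) < 1 := by
    simp only [Fintype.card_fin, hmean]
    refine lt_of_le_of_lt ?_ hsmall
    gcongr
    · exact_mod_cast Nat.choose_le_pow N K
    · exact Nat.choose_div_le_exp_one_mul_pow hdvd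
    · exact chernoff_exponent_le hΔ (by positivity)
  obtain ⟨E, hE⟩ := exists_forall_cellCount_le K (M / D)
    (by linarith [log_nonneg (show 1 ≤ (Δ - 1) / 3 by linarith)]) (Δ * μ) hunion
  refine ⟨E, fun B A hB hA ↦ (hE B A hB hA).trans_eq ?_⟩
  rw [hA, hB, ← hmean]
  ring

/-- Probabilistic existence of a balanced table: if
N^K · (eD)^(M/D) · exp(−(Δ−1)·ln((Δ−1)/3)·K·N1/D) < 1, then there is a table
E : [N] × [N1] → [M] in which, for every row set B of size K and color set A of
size M/D, the number of A-cells in B × [N1] is at most Δ·(|A|/M)·|B|·N1. -/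
theorem stmt_8 (N N1 M K D : ℕ) (hM : 0 < M) (hD : 0 < D) (hdvd : D ∣ M)
    (Δ : ℝ) (hΔ : 4 ≤ Δ)
    (hsmall : (N : ℝ) ^ K * (Real.exp 1 * D) ^ (M / D) *
        Real.exp (-((Δ - 1) * Real.log ((Δ - 1) / 3) * ((K : ℝ) * N1 / D))) < 1) :
    ∃ E : Fin N → Fin N1 → Fin M, ∀ B : Finset (Fin N), ∀ A : Finset (Fin M),
      B.card = K → A.card = M / D →
      (((B ×ˢ (Finset.univ : Finset (Fin N1))).filter fun p => E p.1 p.2 ∈ A).card : ℝ) ≤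
        Δ * ((A.card : ℝ) / M) * B.card * N1 :=
  stmt_8_general N N1 M K D hM hdvd Δ hΔ hsmall
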